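/- On the Lie algebra g_{6,118}^{0,-1,-1} with structure equations (-e^{16}+e^{25}, -e^{15}-e^{26}, e^{36}-e^{45}, e^{35}+e^{46}, 0, 0), the pair F = e^{14} + e^{23} - e^{56} and ρ = e^{126} - e^{135} + e^{245} + e^{346} satisfies dF = 0, dρ = 0, F^3 ≠ 0, and F∧ρ = 0. -/

import Mathlib

open ExteriorAlgebra

noncomputable section

/-- The exterior algebra Λ*(g*) of a 6-dimensional real Lie algebra g,
    identified with the exterior algebra on ℝ^6. -/
abbrev E6 : Type := ExteriorAlgebra ℝ (Fin 6 → ℝ)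

/-- The basis 1-forms e^1, ..., e^6 (0-indexed). -/
def e (i : Fin 6) : E6 := ι ℝ (Pi.single i 1)

/-- Structure equations: d of the basis 1-forms. -/
def d1 : Fin 6 → E6 :=
  ![-(e 0 * e 5) + e 1 * e 4,
    -(e 0 * e 4) - e 1 * e 5,
    e 2 * e 5 - e 3 * e 4,
    e 2 * e 4 + e 3 * e 5,
    0,
    0]

/-- Leibniz: d(e^i ∧ e^j) = de^i ∧ e^j - e^i ∧ de^j. -/
def d2 (i j : Fin 6) : E6 := d1 i * e j - e i * d1 j

/-- Leibniz: d(e^i ∧ e^j ∧ e^k) = de^i ∧ e^j ∧ e^k - e^i ∧ de^j ∧ e^k + e^i ∧ e^j ∧ de^k. -/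
def d3 (i j k : Fin 6) : E6 := d1 i * e j * e k - e i * d1 j * e k + e i * e j * d1 k

/-- F. -/
def F : E6 := e 0 * e 3 + e 1 * e 2 - e 4 * e 5

/-- dF via the Leibniz rule. -/
def dF : E6 := d2 0 3 + d2 1 2 - d2 4 5

/-- ρ. -/
def ρ : E6 := e 0 * e 1 * e 5 - e 0 * e 2 * e 4 + e 1 * e 3 * e 4 + e 2 * e 3 * e 5

/-- dρ via the Leibniz rule. -/
def dρ : E6 := d3 0 1 5 - d3 0 2 4 + d3 1 3 4 + d3 2 3 5

/-! After expanding by distributivity, each identity is sign bookkeeping in `Λ(ℝ⁶)`: monomials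
are sorted into increasing index order using `eⁱ ∧ eⁱ = 0` and anticommutativity. This gives
`F³ = -6 e¹²³⁴⁵⁶`, and the volume form is nonzero because the determinant, placed in degree `6`
and extended by zero, lifts to a linear functional on the exterior algebra taking the value `1`
on it. -/

lemma ιMulti_basis_ne_zero {R M : Type*} [CommRing R] [Nontrivial R] [AddCommGroup M]
    [Module R M] {n : ℕ} (b : Module.Basis (Fin n) R M) : ιMulti R n b ≠ 0 := by
  intro h
  have h' := congrArg (liftAlternating (R := R) (Pi.single n b.det)) h
  rw [liftAlternating_apply_ιMulti, Pi.single_eq_same, b.det_self, map_zero] at h'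
  exact one_ne_zero h'

lemma ιMulti_basisFun :
    ιMulti ℝ 6 (Pi.basisFun ℝ (Fin 6)) = e 0 * (e 1 * (e 2 * (e 3 * (e 4 * e 5)))) := by
  simp only [ιMulti_apply, List.ofFn_succ, List.ofFn_zero, List.prod_cons, List.prod_nil, mul_one,
    Pi.basisFun_apply]
  rfl

lemma e_mul_self (i : Fin 6) : e i * e i = 0 := ι_sq_zero _

lemma e_mul_e_mul_self (i : Fin 6) (c : E6) : e i * (e i * c) = 0 := by
  rw [← mul_assoc, e_mul_self, zero_mul]

/-- Stated for `j < i` so that, as a `simp` lemma, it sorts monomials instead of looping. -/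
lemma e_mul_e_of_lt {i j : Fin 6} : j < i → e i * e j = -(e j * e i) := fun _ =>
  eq_neg_of_add_eq_zero_left (ι_add_mul_swap _ _)

lemma e_mul_e_mul_of_lt {i j : Fin 6} (c : E6) (h : j < i) :
    e i * (e j * c) = -(e j * (e i * c)) := by
  rw [← mul_assoc, e_mul_e_of_lt h, neg_mul, mul_assoc]

lemma dF_eq_zero : dF = 0 := by
  simp +decide only [dF, d2, d1, Matrix.cons_val, mul_add, add_mul, mul_sub, sub_mul, neg_mul,
    mul_neg, mul_assoc, e_mul_e_of_lt, mul_zero, zero_mul, neg_neg]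
  abel

lemma dρ_eq_zero : dρ = 0 := by
  simp +decide only [dρ, d3, d1, Matrix.cons_val, mul_add, add_mul, mul_sub, sub_mul, neg_mul,
    mul_neg, mul_assoc, e_mul_self, e_mul_e_mul_self, e_mul_e_of_lt, mul_zero, zero_mul, neg_neg]
  abel

lemma F_mul_ρ_eq_zero : F * ρ = 0 := by
  simp +decide only [F, ρ, mul_add, add_mul, mul_sub, sub_mul, mul_neg, mul_assoc, e_mul_self,
    e_mul_e_mul_self, e_mul_e_of_lt, e_mul_e_mul_of_lt, mul_zero, neg_neg]
  abel

lemma F_mul_F_mul_F : F * F * F = -(6 : ℝ) • ιMulti ℝ 6 (Pi.basisFun ℝ (Fin 6)) := by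
  simp +decide only [F, ιMulti_basisFun, mul_add, add_mul, mul_sub, sub_mul, neg_mul, mul_neg,
    mul_assoc, e_mul_self, e_mul_e_mul_self, e_mul_e_of_lt, e_mul_e_mul_of_lt, mul_zero,
    zero_mul, neg_neg]
  module

/-- Symplectic half-flat structure on g_{6,118}^{0,-1,-1}. -/
theorem stmt6 : dF = 0 ∧ dρ = 0 ∧ F * F * F ≠ 0 ∧ F * ρ = 0 := by
  refine ⟨dF_eq_zero, dρ_eq_zero, ?_, F_mul_ρ_eq_zero⟩
  rw [F_mul_F_mul_F]
  exact smul_ne_zero (by norm_num) (ιMulti_basis_ne_zero _)
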